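/- Let (φ, ξ, η, g, ε) be an (ε)-almost paracontact metric structure on a real vector space V with fundamental form Φ(X, Y) = g(X, φY). Let R : V × V × V × V → ℝ be a multilinear map satisfying, for all X, Y, Z, W ∈ V: (i) ε R(X, Y, Z, φW) = g(X, Z) Φ(Y, W) − g(Y, Z) Φ(X, W), and (ii) R(X, Y, Z, ξ) = −η(X) g(Y, Z) + η(Y) g(X, Z). Then R(X, Y, Z, W) = −ε (g(Y, Z) g(X, W) − g(X, Z) g(Y, W)) for all X, Y, Z, W ∈ V. -/

import Mathlib

/-!
Since `φξ = 0`, compatibility of `g` with `φ` gives `g(X, ξ) = ε η(X)`. Feeding `φW` into (i) and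
expanding `φ²W = W − η(W)ξ`, the `ξ`-components on both sides are evaluated by (ii) and by
`g(·, ξ) = ε η`, and they cancel, leaving `ε R(X,Y,Z,W) = g(X,Z) g(Y,W) − g(Y,Z) g(X,W)`;
multiplying by `ε` and using `ε² = 1` gives the claim.
-/

section AlmostParacontact

variable {V : Type*} [AddCommGroup V] [Module ℝ V] {φ : V →ₗ[ℝ] V} {ξ : V} {η : V →ₗ[ℝ] ℝ}
  {ε : ℝ}

theorem metric_apply_reeb {g : V →ₗ[ℝ] V →ₗ[ℝ] ℝ} (hηξ : η ξ = 1) (hφξ : φ ξ = 0)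
    (hgφ : ∀ X Y : V, g (φ X) (φ Y) = g X Y - ε * (η X * η Y)) (X : V) :
    g X ξ = ε * η X := by
  have h := hgφ X ξ
  rw [hφξ, map_zero, hηξ, mul_one] at h
  linarith

theorem eps_mul_curvature_eq {g : V → V →ₗ[ℝ] ℝ} {R : V → V → V → V →ₗ[ℝ] ℝ}
    (hφ2 : ∀ X : V, φ (φ X) = X - η X • ξ) (hgξ : ∀ X : V, g X ξ = ε * η X)
    (hRφ : ∀ X Y Z W : V, ε * R X Y Z (φ W) = g X Z * g Y (φ W) - g Y Z * g X (φ W))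
    (hRξ : ∀ X Y Z : V, R X Y Z ξ = -(η X) * g Y Z + η Y * g X Z) (X Y Z W : V) :
    ε * R X Y Z W = g X Z * g Y W - g Y Z * g X W := by
  have h := hRφ X Y Z (φ W)
  simp only [hφ2, map_sub, map_smul, smul_eq_mul, hRξ, hgξ] at h
  linear_combination h

end AlmostParacontact

theorem stmt_11_general {V : Type*} [AddCommGroup V] [Module ℝ V]
    (φ : V →ₗ[ℝ] V) (ξ : V) (η : V →ₗ[ℝ] ℝ)
    (g : V →ₗ[ℝ] V →ₗ[ℝ] ℝ) (ε : ℝ)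
    (hφ2 : ∀ X : V, φ (φ X) = X - η X • ξ)
    (hηξ : η ξ = 1)
    (hφξ : φ ξ = 0)
    (hε : ε = 1 ∨ ε = -1)
    (hgφ : ∀ X Y : V, g (φ X) (φ Y) = g X Y - ε * (η X * η Y))
    (Φ : V → V → ℝ) (hΦ : ∀ X Y : V, Φ X Y = g X (φ Y))
    (R : V →ₗ[ℝ] V →ₗ[ℝ] V →ₗ[ℝ] V →ₗ[ℝ] ℝ)
    (hsymR : ∀ X Y Z W : V,
      ε * R X Y Z (φ W) = g X Z * Φ Y W - g Y Z * Φ X W)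
    (hRξ : ∀ X Y Z : V, R X Y Z ξ = -(η X) * g Y Z + η Y * g X Z) :
    ∀ X Y Z W : V,
      R X Y Z W = -ε * (g Y Z * g X W - g X Z * g Y W) := by
  intro X Y Z W
  have hεε : ε * ε = 1 := by rcases hε with rfl | rfl <;> norm_num
  have hRφ : ∀ X Y Z W : V,
      ε * R X Y Z (φ W) = g X Z * g Y (φ W) - g Y Z * g X (φ W) := by
    intro X Y Z W
    rw [hsymR, hΦ, hΦ]
  have h := eps_mul_curvature_eq (g := fun X => g X) (R := fun X Y Z => R X Y Z) hφ2
    (metric_apply_reeb hηξ hφξ hgφ) hRφ hRξ X Y Z W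
  linear_combination ε * h - R X Y Z W * hεε

/-- In an `(ε)`-almost paracontact metric vector space, a multilinear map `R` satisfying
`ε R(X,Y,Z,φW) = g(X,Z)Φ(Y,W) − g(Y,Z)Φ(X,W)` and
`R(X,Y,Z,ξ) = −η(X)g(Y,Z) + η(Y)g(X,Z)` is of constant-curvature form
`R(X,Y,Z,W) = −ε(g(Y,Z)g(X,W) − g(X,Z)g(Y,W))`. -/
theorem stmt_11 {V : Type*} [AddCommGroup V] [Module ℝ V]
    (φ : V →ₗ[ℝ] V) (ξ : V) (η : V →ₗ[ℝ] ℝ)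
    (g : V →ₗ[ℝ] V →ₗ[ℝ] ℝ) (ε : ℝ)
    (hφ2 : ∀ X : V, φ (φ X) = X - η X • ξ)
    (hηξ : η ξ = 1)
    (hφξ : φ ξ = 0)
    (hηφ : ∀ X : V, η (φ X) = 0)
    (hgsym : ∀ X Y : V, g X Y = g Y X)
    (hgnd : ∀ X : V, (∀ Y : V, g X Y = 0) → X = 0)
    (hε : ε = 1 ∨ ε = -1)
    (hgφ : ∀ X Y : V, g (φ X) (φ Y) = g X Y - ε * (η X * η Y))
    (Φ : V → V → ℝ) (hΦ : ∀ X Y : V, Φ X Y = g X (φ Y))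
    (R : V →ₗ[ℝ] V →ₗ[ℝ] V →ₗ[ℝ] V →ₗ[ℝ] ℝ)
    (hsymR : ∀ X Y Z W : V,
      ε * R X Y Z (φ W) = g X Z * Φ Y W - g Y Z * Φ X W)
    (hRξ : ∀ X Y Z : V, R X Y Z ξ = -(η X) * g Y Z + η Y * g X Z) :
    ∀ X Y Z W : V,
      R X Y Z W = -ε * (g Y Z * g X W - g X Z * g Y W) :=
  stmt_11_general φ ξ η g ε hφ2 hηξ hφξ hε hgφ Φ hΦ R hsymR hRξ
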